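/- arXiv:2403.06634 — 3 statements merged into one kernel-verified Lean document; each statement's English description precedes it below -/
import Mathlib

section
/- Let z ∈ ℝ^l be logits, let N = Σⱼ exp(zⱼ), and fix a token t. Define y = z_top − log N and y' = z_top − log(N + (1/e − 1)·exp(z_t)), where z_top is any fixed real. Then the softmax probability p = exp(z_t)/N of token t satisfies p = (exp(y − y') − 1)/(1/e − 1). -/
theorem binarized_logprob_extraction {l : ℕ} (hl : 1 ≤ l)
    (z : Fin l → ℝ) (t : Fin l) (ztop : ℝ)
    (N : ℝ) (hN : N = ∑ j, Real.exp (z j))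
    (y y' : ℝ)
    (hy : y = ztop - Real.log N)
    (hy' : y' = ztop - Real.log (N + (1 / Real.exp 1 - 1) * Real.exp (z t)))
    (p : ℝ) (hp : p = Real.exp (z t) / N) :
    p = (Real.exp (y - y') - 1) / (1 / Real.exp 1 - 1) := by
  have hNpos : 0 < N := by
    rw [hN]
    exact Finset.sum_pos (fun j _ => Real.exp_pos _) ⟨t, Finset.mem_univ t⟩
  have hle : Real.exp (z t) ≤ N := by
    rw [hN]
    exact Finset.single_le_sum (fun j _ => (Real.exp_pos _).le) (Finset.mem_univ t)
  have hN'pos : 0 < N + (1 / Real.exp 1 - 1) * Real.exp (z t) := by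
    have h1 : 0 < (1 / Real.exp 1) * Real.exp (z t) :=
      mul_pos (by positivity) (Real.exp_pos _)
    nlinarith
  have hexp : Real.exp (y - y') = (N + (1 / Real.exp 1 - 1) * Real.exp (z t)) / N := by
    rw [hy, hy']
    have : ztop - Real.log N - (ztop - Real.log (N + (1 / Real.exp 1 - 1) * Real.exp (z t)))
        = Real.log (N + (1 / Real.exp 1 - 1) * Real.exp (z t)) - Real.log N := by ring
    rw [this, Real.exp_sub, Real.exp_log hN'pos, Real.exp_log hNpos]
  have hc : 1 / Real.exp 1 - 1 ≠ 0 := by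
    have : 1 / Real.exp 1 < 1 := by
      rw [div_lt_one (Real.exp_pos 1)]
      have := Real.add_one_lt_exp (x := 1) one_ne_zero
      linarith
    linarith
  rw [hp, hexp, div_sub_one hNpos.ne', eq_div_iff hc, div_mul_eq_mul_div,
    eq_div_iff hNpos.ne']
  field_simp
  ring
end

section
/- Let z ∈ ℝ^l with Σⱼ exp(zⱼ) = 1, fix a token i and a bias B ∈ ℝ, and define the biased logprob a = zᵢ + B − log(Σ_{j≠i} exp(zⱼ) + exp(zᵢ + B)). Then zᵢ = −log(exp(B − a) − exp(B) + 1). -/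
theorem single_logprob_recovery {l : ℕ} (hl : 2 ≤ l)
    (z : Fin l → ℝ) (hz : ∑ j, Real.exp (z j) = 1)
    (i : Fin l) (B : ℝ) (a : ℝ)
    (ha : a = z i + B -
      Real.log ((∑ j ∈ Finset.univ.erase i, Real.exp (z j)) + Real.exp (z i + B))) :
    z i = -Real.log (Real.exp (B - a) - Real.exp B + 1) := by
  set S := ∑ j ∈ Finset.univ.erase i, Real.exp (z j) with hS
  have hSE : S + Real.exp (z i) = 1 := by
    rw [hS, Finset.sum_erase_add _ _ (Finset.mem_univ i)]; exact hz
  have hSpos : 0 ≤ S := Finset.sum_nonneg fun j _ => (Real.exp_pos _).le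
  have hD : 0 < S + Real.exp (z i + B) :=
    lt_of_lt_of_le (Real.exp_pos _) (le_add_of_nonneg_left hSpos)
  have hBa : Real.exp (B - a) = (S + Real.exp (z i + B)) * Real.exp (-(z i)) := by
    rw [ha]
    have : B - (z i + B - Real.log (S + Real.exp (z i + B)))
        = Real.log (S + Real.exp (z i + B)) + (-(z i)) := by ring
    rw [this, Real.exp_add, Real.exp_log hD]
  have hE : Real.exp (B - a) - Real.exp B + 1 = Real.exp (-(z i)) := by
    rw [hBa, Real.exp_add]
    have h1 : Real.exp (z i) * Real.exp (-(z i)) = 1 := by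
      rw [← Real.exp_add]; simp
    have hS1 : S = 1 - Real.exp (z i) := by linarith
    linear_combination (Real.exp B - 1) * h1 + Real.exp (-(z i)) * hS1
  rw [hE, Real.log_exp]; ring
end

section
/- Let z ∈ ℝ^l with Σⱼ exp(zⱼ) = 1, let i₁,…,i_K be distinct indices, let B ∈ ℝ, and define for each k the biased logprob a_k = z_{i_k} + B − log((e^B − 1)·Σ_{m=1}^{K} exp(z_{i_m}) + 1). Then for each k, z_{i_k} = a_k − B − log(1 − (1 − e^{−B})·Σ_{j=1}^{K} exp(a_j)). -/
theorem topK_logprob_recovery {l K : ℕ} (hK : 1 ≤ K) (hKl : K ≤ l)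
    (z : Fin l → ℝ) (hz : ∑ j, Real.exp (z j) = 1)
    (ι : Fin K → Fin l) (hι : Function.Injective ι)
    (B : ℝ) (a : Fin K → ℝ)
    (ha : ∀ k, a k = z (ι k) + B -
      Real.log ((Real.exp B - 1) * (∑ m, Real.exp (z (ι m))) + 1))
    (hpos : 0 < 1 - (1 - Real.exp (-B)) * ∑ j, Real.exp (a j)) :
    ∀ k, z (ι k) = a k - B -
      Real.log (1 - (1 - Real.exp (-B)) * ∑ j, Real.exp (a j)) := by
  set S : ℝ := ∑ m, Real.exp (z (ι m)) with hS
  have hS0 : 0 < S := by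
    apply Finset.sum_pos (fun i _ => Real.exp_pos _)
    exact Finset.univ_nonempty_iff.mpr ⟨⟨0, hK⟩⟩
  have hS1 : S ≤ 1 := by
    have h1 : S = ∑ j ∈ Finset.univ.image ι, Real.exp (z j) := by
      rw [Finset.sum_image (fun x _ y _ h => hι h)]
    rw [h1, ← hz]
    exact Finset.sum_le_sum_of_subset_of_nonneg (Finset.subset_univ _)
      (fun i _ _ => (Real.exp_pos _).le)
  set D : ℝ := (Real.exp B - 1) * S + 1 with hD
  have hD0 : 0 < D := by
    nlinarith [Real.exp_pos B, mul_le_mul_of_nonneg_left hS1 (Real.exp_pos B).le]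
  have hexp : ∀ k, Real.exp (a k) = Real.exp (z (ι k)) * Real.exp B / D := by
    intro k
    rw [ha k, Real.exp_sub, Real.exp_add, Real.exp_log hD0]
  have hsum : ∑ j, Real.exp (a j) = Real.exp B * S / D := by
    simp only [hexp, hS]
    rw [← Finset.sum_div, ← Finset.sum_mul, ← hS]
    ring
  have harg : 1 - (1 - Real.exp (-B)) * ∑ j, Real.exp (a j) = 1 / D := by
    rw [hsum, Real.exp_neg]
    have hB := Real.exp_ne_zero B
    field_simp
    ring_nf
    rw [hD]
    ring
  intro k
  rw [ha k, harg, Real.log_div one_ne_zero hD0.ne', Real.log_one]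
  ring
end
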